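/- Square summability of PAM iterate gaps (part 2 of the convergence theorem for the Laplace–Beltrami basis pursuit algorithm): Let X and Y be real normed vector spaces, W ⊆ X and S ⊆ Y sets, E : X × Y → ℝ a function, and η > 0. Suppose (w_j)_{j≥0} in W and (Ψ_j)_{j≥0} in S satisfy: for every j ≥ 0, Ψ_{j+1} ∈ S minimizes Ψ ↦ E(w_j, Ψ) + (1/(2η))‖Ψ − Ψ_j‖² over S, and w_{j+1} ∈ W minimizes w ↦ E(w, Ψ_{j+1}) + (1/(2η))‖w − w_j‖² over W. If moreover there exists m ∈ ℝ with E(w, Ψ) ≥ m for all w ∈ W and Ψ ∈ S, then the series Σ_{j≥0} (‖w_{j+1} − w_j‖² + ‖Ψ_{j+1} − Ψ_j‖²) converges (the sequence of summands is summable). -/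

import Mathlib

/-! Taking the previous iterate as competitor in each proximal step shows that one PAM sweep
lowers `E` by at least `(1/(2η))` times the squared gap. Since `E` is bounded below on `W × S`,
the telescoped decreases, hence the partial sums of the gaps, are bounded. -/

open Finset

theorem summable_of_le_sub_succ {f g : ℕ → ℝ} {m : ℝ} (hg : ∀ j, 0 ≤ g j)
    (hf : ∀ j, m ≤ f j) (hfg : ∀ j, g j ≤ f j - f (j + 1)) : Summable g :=
  summable_of_sum_range_le hg fun n =>
    calc ∑ j ∈ range n, g j ≤ ∑ j ∈ range n, (f j - f (j + 1)) := sum_le_sum fun j _ => hfg j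
      _ = f 0 - f n := sum_range_sub' f n
      _ ≤ f 0 - m := by linarith [hf n]

theorem proximal_step_descent {Z : Type*} [SeminormedAddCommGroup Z] {K : Set Z} {F : Z → ℝ}
    {c : ℝ} {z₀ z₁ : Z} (hz₀ : z₀ ∈ K)
    (hmin : ∀ z ∈ K, F z₁ + c * ‖z₁ - z₀‖ ^ 2 ≤ F z + c * ‖z - z₀‖ ^ 2) :
    F z₁ + c * ‖z₁ - z₀‖ ^ 2 ≤ F z₀ := by
  simpa using hmin z₀ hz₀

theorem pam_square_summable_general
    {X Y : Type*} [NormedAddCommGroup X]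
    [NormedAddCommGroup Y]
    (W : Set X) (S : Set Y) (E : X × Y → ℝ) (η : ℝ) (hη : 0 < η)
    (w : ℕ → X) (Ψ : ℕ → Y)
    (hwW : ∀ j, w j ∈ W) (hΨS : ∀ j, Ψ j ∈ S)
    (hΨmin : ∀ j, ∀ ψ ∈ S,
      E (w j, Ψ (j + 1)) + (1 / (2 * η)) * ‖Ψ (j + 1) - Ψ j‖ ^ 2 ≤
        E (w j, ψ) + (1 / (2 * η)) * ‖ψ - Ψ j‖ ^ 2)
    (hwmin : ∀ j, ∀ u ∈ W,
      E (w (j + 1), Ψ (j + 1)) + (1 / (2 * η)) * ‖w (j + 1) - w j‖ ^ 2 ≤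
        E (u, Ψ (j + 1)) + (1 / (2 * η)) * ‖u - w j‖ ^ 2)
    (m : ℝ) (hbound : ∀ u ∈ W, ∀ ψ ∈ S, m ≤ E (u, ψ)) :
    Summable (fun j : ℕ => ‖w (j + 1) - w j‖ ^ 2 + ‖Ψ (j + 1) - Ψ j‖ ^ 2) := by
  have hc : 0 < 1 / (2 * η) := by positivity
  have hdescent : ∀ j, 1 / (2 * η) * (‖w (j + 1) - w j‖ ^ 2 + ‖Ψ (j + 1) - Ψ j‖ ^ 2) ≤
      E (w j, Ψ j) - E (w (j + 1), Ψ (j + 1)) := fun j => by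
    have hΨstep := proximal_step_descent (F := fun ψ => E (w j, ψ)) (hΨS j) (hΨmin j)
    have hwstep := proximal_step_descent (F := fun u => E (u, Ψ (j + 1))) (hwW j) (hwmin j)
    linarith
  exact (summable_mul_left_iff hc.ne').mp (summable_of_le_sub_succ (fun j => by positivity)
    (fun j => hbound _ (hwW j) _ (hΨS j)) hdescent)

/-- Square summability of PAM iterate gaps. -/
theorem pam_square_summable
    {X Y : Type*} [NormedAddCommGroup X] [NormedSpace ℝ X]
    [NormedAddCommGroup Y] [NormedSpace ℝ Y]
    (W : Set X) (S : Set Y) (E : X × Y → ℝ) (η : ℝ) (hη : 0 < η)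
    (w : ℕ → X) (Ψ : ℕ → Y)
    (hwW : ∀ j, w j ∈ W) (hΨS : ∀ j, Ψ j ∈ S)
    (hΨmin : ∀ j, ∀ ψ ∈ S,
      E (w j, Ψ (j + 1)) + (1 / (2 * η)) * ‖Ψ (j + 1) - Ψ j‖ ^ 2 ≤
        E (w j, ψ) + (1 / (2 * η)) * ‖ψ - Ψ j‖ ^ 2)
    (hwmin : ∀ j, ∀ u ∈ W,
      E (w (j + 1), Ψ (j + 1)) + (1 / (2 * η)) * ‖w (j + 1) - w j‖ ^ 2 ≤
        E (u, Ψ (j + 1)) + (1 / (2 * η)) * ‖u - w j‖ ^ 2)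
    (m : ℝ) (hbound : ∀ u ∈ W, ∀ ψ ∈ S, m ≤ E (u, ψ)) :
    Summable (fun j : ℕ => ‖w (j + 1) - w j‖ ^ 2 + ‖Ψ (j + 1) - Ψ j‖ ^ 2) :=
  pam_square_summable_general W S E η hη w Ψ hwW hΨS hΨmin hwmin m hbound
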